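/- Let p = ∑_{σ ∈ {0,1}^m} (∏_i δ_i^{1-σ_i}(1-δ_i)^{σ_i}) p_σ, where each p_σ: Σ^{a+b} → ℝ satisfies p_σ(i,j) = ∑_{x∈Σ} π^σ(x) M_A(x,i) M_B^σ(x,j) with a common matrix M_A ∈ ℝ^{Σ×Σ^a} (and |Σ| = 4). Then rank(flatt_{A|B}(p)) ≤ 4, and hence all 5×5 minors of flatt_{A|B}(p) vanish. -/
import Mathlib

open Matrix

/-- The flattening of `p : Σ^a × Σ^b → ℝ` relative to the bipartition
separating the first `a` coordinates from the last `b` coordinates. -/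
def flatt {S : Type*} {a b : ℕ} (p : ((Fin a → S) × (Fin b → S)) → ℝ) :
    Matrix (Fin a → S) (Fin b → S) ℝ :=
  Matrix.of fun i j => p (i, j)

/-- Theorem 1 of the paper: the flattening of a distribution on a phylogenetic
network with a tree-clade, under the general Markov model, has rank ≤ 4 and
hence all its 5×5 minors vanish. -/
theorem network_flattening_rank_le_four {S : Type*} [Fintype S] [DecidableEq S]
    (hS : Fintype.card S = 4) {a b mr : ℕ}
    (δ : Fin mr → ℝ) (hδ : ∀ i, δ i ∈ Set.Icc (0 : ℝ) 1)
    (pσ : (Fin mr → Fin 2) → ((Fin a → S) × (Fin b → S)) → ℝ)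
    (π : (Fin mr → Fin 2) → S → ℝ)
    (MA : Matrix S (Fin a → S) ℝ)
    (MB : (Fin mr → Fin 2) → Matrix S (Fin b → S) ℝ)
    (hfact : ∀ σ i j, pσ σ (i, j) = ∑ x, π σ x * MA x i * MB σ x j)
    (p : ((Fin a → S) × (Fin b → S)) → ℝ)
    (hp : p = ∑ σ : Fin mr → Fin 2,
      (∏ i, (δ i) ^ (1 - (σ i : ℕ)) * (1 - δ i) ^ (σ i : ℕ)) • pσ σ) :
    (flatt p).rank ≤ 4 ∧
      ∀ (f : Fin 5 → (Fin a → S)) (g : Fin 5 → (Fin b → S)),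
        ((flatt p).submatrix f g).det = 0 := by
  set c : (Fin mr → Fin 2) → ℝ :=
    fun σ => ∏ i, (δ i) ^ (1 - (σ i : ℕ)) * (1 - δ i) ^ (σ i : ℕ) with hc
  set D : Matrix S (Fin b → S) ℝ :=
    Matrix.of fun x j => ∑ σ : Fin mr → Fin 2, c σ * (π σ x * MB σ x j) with hD
  have key : flatt p = MAᵀ * D := by
    ext i j
    simp only [flatt, Matrix.of_apply, Matrix.mul_apply, Matrix.transpose_apply, hp,
      Finset.sum_apply, Pi.smul_apply, smul_eq_mul, hD]
    simp_rw [hfact, Finset.mul_sum, Finset.sum_comm (γ := S)]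
    congr 1; ext x; congr 1; ext σ; ring
  constructor
  · rw [key]
    calc (MAᵀ * D).rank ≤ (MAᵀ).rank := Matrix.rank_mul_le_left _ _
      _ ≤ Fintype.card S := Matrix.rank_le_card_width _
      _ = 4 := hS
  · intro f g
    by_contra h
    have hU : IsUnit ((flatt p).submatrix f g) :=
      (Matrix.isUnit_iff_isUnit_det _).2 (isUnit_iff_ne_zero.2 h)
    have h5 : ((flatt p).submatrix f g).rank = 5 := by
      rw [Matrix.rank_of_isUnit _ hU]; simp
    have hle : ((flatt p).submatrix f g).rank ≤ 4 := by
      have : (flatt p).submatrix f g = (MAᵀ.submatrix f id) * (D.submatrix id g) := by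
        rw [key, Matrix.submatrix_mul _ _ _ _ _ Function.bijective_id]
      rw [this]
      calc _ ≤ (MAᵀ.submatrix f id).rank := Matrix.rank_mul_le_left _ _
        _ ≤ Fintype.card S := Matrix.rank_le_card_width _
        _ = 4 := hS
    omega
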